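/- Let A ∈ ℂ^{N×N} be positive semidefinite Hermitian with rank A ≤ m for some integer m ≥ 1, and suppose tr A ≤ m·λ for some λ > 0. Let α ∈ (0,1), β = 1 − α, ρ > 0, and c = 1/(βρ). Then log₂ det( I_N + (α/β) · (diag{A} + c·I_N)^{-1} · A ) ≤ m · log₂( 1 + αλN / (λmβ + N/ρ) ). -/

import Mathlib

/-!
Write `D = diag A + cI`, `t = α/β` and `aᵢ = Aᵢᵢ`. By the Weinstein–Aronszajn identity,
`det (I + t D⁻¹A) = det (I + t M)` for `M = D^{-1/2} A D^{-1/2}`, which is positive semidefinite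
of rank at most `m`. Hence the determinant is `∏ (1 + t μᵢ)` over at most `m` nonzero eigenvalues
`μᵢ ≥ 0`, and AM-GM bounds it by `(1 + t tr M / m)^m`. Finally `tr M = ∑ aᵢ/(aᵢ + c)`, which by
Cauchy–Schwarz is at most `N s/(s + N c)` whenever `∑ aᵢ ≤ s`; take `s = mλ`.
-/

open Finset
open Matrix BigOperators ComplexOrder

theorem Real.prod_le_sum_div_card_pow {ι : Type*} (s : Finset ι) {z : ι → ℝ}
    (hz : ∀ i ∈ s, 0 ≤ z i) : ∏ i ∈ s, z i ≤ ((∑ i ∈ s, z i) / #s) ^ #s := by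
  rcases s.eq_empty_or_nonempty with rfl | hs
  · simp
  have hcard : (0 : ℝ) < #s := by exact_mod_cast hs.card_pos
  have amgm := Real.geom_mean_le_arith_mean s (fun _ ↦ 1) z (fun _ _ ↦ zero_le_one)
    (by simpa using hcard) hz
  simp only [Real.rpow_one, one_mul, sum_const, nsmul_eq_mul, mul_one] at amgm
  have hprod : 0 ≤ ∏ i ∈ s, z i := prod_nonneg hz
  calc ∏ i ∈ s, z i = ((∏ i ∈ s, z i) ^ (#s : ℝ)⁻¹) ^ (#s : ℝ) := by
        rw [← Real.rpow_mul hprod, inv_mul_cancel₀ hcard.ne', Real.rpow_one]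
    _ ≤ ((∑ i ∈ s, z i) / #s) ^ (#s : ℝ) := by gcongr
    _ = _ := Real.rpow_natCast _ _

/-- Padding `s` with `m - #s` factors equal to `1` before applying AM-GM. -/
theorem Real.prod_one_add_le_one_add_sum_div_pow {ι : Type*} (s : Finset ι) {x : ι → ℝ}
    (hx : ∀ i ∈ s, -1 ≤ x i) {m : ℕ} (hm : #s ≤ m) :
    ∏ i ∈ s, (1 + x i) ≤ (1 + (∑ i ∈ s, x i) / m) ^ m := by
  classical
  rcases Nat.eq_zero_or_pos m with rfl | hm0
  · simp [card_eq_zero.mp (Nat.le_zero.mp hm)]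
  let z : s ⊕ Fin (m - #s) → ℝ := Sum.elim (fun i ↦ 1 + x i) fun _ ↦ 1
  have hcard : #(univ : Finset (s ⊕ Fin (m - #s))) = m := by simp [hm]
  have amgm := Real.prod_le_sum_div_card_pow univ (z := z) (by
    rintro (i | j) -
    · simp only [z, Sum.elim_inl]; linarith [hx i i.2]
    · simp [z])
  simp only [hcard, Fintype.prod_sum_type, Fintype.sum_sum_type, z, Sum.elim_inl, Sum.elim_inr,
    prod_const_one, mul_one, sum_const, card_univ, Fintype.card_fin, nsmul_eq_mul] at amgm
  rw [prod_coe_sort s (fun i ↦ 1 + x i)] at amgm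
  refine amgm.trans_eq (congrArg (· ^ m) ?_)
  rw [sum_coe_sort s (fun i ↦ 1 + x i), sum_add_distrib, sum_const, nsmul_one, Nat.cast_sub hm]
  field_simp
  ring

theorem Real.prod_one_add_le_one_add_sum_div_pow_of_card_filter_le {ι : Type*} (s : Finset ι)
    {x : ι → ℝ} (hx : ∀ i ∈ s, -1 ≤ x i) {m : ℕ} (hm : #{i ∈ s | x i ≠ 0} ≤ m) :
    ∏ i ∈ s, (1 + x i) ≤ (1 + (∑ i ∈ s, x i) / m) ^ m := by
  classical
  rw [← sum_filter_ne_zero, ← prod_filter_of_ne fun i _ h ↦ by simpa using h]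
  exact Real.prod_one_add_le_one_add_sum_div_pow _ (fun i hi ↦ hx i (mem_filter.mp hi).1) hm

/-- Titu's lemma bounds `∑ 1 / (a i + c)` from below by `(#ι)² / ∑ (a i + c)`. -/
theorem Real.sum_div_add_le {ι : Type*} [Fintype ι] {a : ι → ℝ} (ha : ∀ i, 0 ≤ a i) {c s : ℝ}
    (hc : 0 < c) (hs : ∑ i, a i ≤ s) :
    ∑ i, a i / (a i + c) ≤ Fintype.card ι * s / (s + Fintype.card ι * c) := by
  cases isEmpty_or_nonempty ι
  · simp
  set N : ℝ := (Fintype.card ι : ℝ)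
  set S := ∑ i, a i
  have hpos : ∀ i ∈ univ, 0 < a i + c := fun i _ ↦ by linarith [ha i]
  have titu := sq_sum_div_le_sum_sq_div univ (fun _ ↦ (1 : ℝ)) hpos
  have hsum : ∑ i, (a i + c) = S + N * c := by
    rw [sum_add_distrib, sum_const, nsmul_eq_mul, card_univ]
  simp only [sum_const, card_univ, nsmul_one, one_pow, hsum] at titu
  have hrw : ∑ i, a i / (a i + c) = N - c * ∑ i, 1 / (a i + c) := by
    have h : ∀ i, a i / (a i + c) = 1 - c * (1 / (a i + c)) := fun i ↦ by
      field_simp [(hpos i (mem_univ i)).ne']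
      ring
    simp only [h, sum_sub_distrib, ← mul_sum, sum_const, card_univ, nsmul_one, N]
  have hN : 0 < N := by positivity
  have hS : 0 ≤ S := sum_nonneg fun i _ ↦ ha i
  calc ∑ i, a i / (a i + c) = N - c * ∑ i, 1 / (a i + c) := hrw
    _ ≤ N - c * (N ^ 2 / (S + N * c)) := by gcongr
    _ = N * S / (S + N * c) := by field_simp; ring
    _ ≤ N * s / (s + N * c) := by
      rw [div_le_div_iff₀ (by positivity) (by linarith [mul_pos hN hc])]
      nlinarith [mul_pos (mul_pos hN hN) hc]

namespace Matrix

variable {n 𝕜 : Type*} [DecidableEq n] [RCLike 𝕜]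

noncomputable def invSqrtDiagonal (d : n → ℝ) : Matrix n n 𝕜 :=
  diagonal fun i ↦ ((√(d i))⁻¹ : ℝ)

theorem invSqrtDiagonal_conjTranspose (d : n → ℝ) :
    (invSqrtDiagonal d : Matrix n n 𝕜)ᴴ = invSqrtDiagonal d := by
  simp [invSqrtDiagonal, diagonal_conjTranspose]

theorem IsHermitian.diagonal_diag_add_smul_one {A : Matrix n n 𝕜} (hA : A.IsHermitian) (c : ℝ) :
    diagonal A.diag + (c : 𝕜) • 1 = diagonal fun i ↦ ((RCLike.re (A i i) + c : ℝ) : 𝕜) := by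
  rw [smul_one_eq_diagonal, diagonal_add]
  congr! with i
  rw [diag_apply, RCLike.ofReal_add, hA.coe_re_apply_self]

variable [Fintype n]

theorem IsHermitian.det_one_add_smul {M : Matrix n n 𝕜} (hM : M.IsHermitian) (t : ℝ) :
    det (1 + (t : 𝕜) • M) = ∏ i, ((1 + t * hM.eigenvalues i : ℝ) : 𝕜) := by
  set U := hM.eigenvectorUnitary
  have hdiag : 1 + (t : 𝕜) • diagonal (RCLike.ofReal ∘ hM.eigenvalues) =
      diagonal fun i ↦ ((1 + t * hM.eigenvalues i : ℝ) : 𝕜) := by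
    ext i j
    by_cases h : i = j
    · subst h; simp
    · simp [h]
  conv_lhs => rw [hM.spectral_theorem, ← map_smul, ← map_one (Unitary.conjStarAlgAut 𝕜 _ U),
    ← map_add, hdiag, Unitary.conjStarAlgAut_apply, det_mul_right_comm,
    Unitary.mul_star_self_of_mem U.2, one_mul, det_diagonal]

theorem PosSemidef.one_le_re_det_one_add_smul {M : Matrix n n 𝕜} (hM : M.PosSemidef) {t : ℝ}
    (ht : 0 ≤ t) : 1 ≤ RCLike.re (det (1 + (t : 𝕜) • M)) := by
  rw [hM.isHermitian.det_one_add_smul, ← RCLike.ofReal_prod, RCLike.ofReal_re]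
  exact one_le_prod fun i _ ↦ le_add_of_nonneg_right (mul_nonneg ht (hM.eigenvalues_nonneg i))

theorem PosSemidef.re_det_one_add_smul_le {M : Matrix n n 𝕜} (hM : M.PosSemidef) {t : ℝ}
    (ht : 0 ≤ t) {m : ℕ} (hm : M.rank ≤ m) :
    RCLike.re (det (1 + (t : 𝕜) • M)) ≤ (1 + t * RCLike.re M.trace / m) ^ m := by
  have hμ := hM.eigenvalues_nonneg
  have hsupport : #{i | t * hM.isHermitian.eigenvalues i ≠ 0} ≤ m := by
    rw [hM.isHermitian.rank_eq_card_non_zero_eigs, Fintype.card_subtype] at hm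
    refine le_trans (card_le_card fun i ↦ ?_) hm
    simp only [mem_filter, mem_univ, true_and]
    exact right_ne_zero_of_mul
  rw [hM.isHermitian.det_one_add_smul, ← RCLike.ofReal_prod, RCLike.ofReal_re,
    hM.isHermitian.trace_eq_sum_eigenvalues, ← RCLike.ofReal_sum, RCLike.ofReal_re, mul_sum]
  exact Real.prod_one_add_le_one_add_sum_div_pow_of_card_filter_le _
    (fun i _ ↦ by linarith [mul_nonneg ht (hμ i)]) hsupport

theorem invSqrtDiagonal_mul_self {d : n → ℝ} (hd : ∀ i, 0 ≤ d i) :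
    (invSqrtDiagonal d : Matrix n n 𝕜) * invSqrtDiagonal d =
      diagonal fun i ↦ (((d i)⁻¹ : ℝ) : 𝕜) := by
  rw [invSqrtDiagonal, diagonal_mul_diagonal]
  congr! with i
  rw [← RCLike.ofReal_mul, ← mul_inv, Real.mul_self_sqrt (hd i)]

theorem inv_diagonal_eq_invSqrtDiagonal_mul_self {d : n → ℝ} (hd : ∀ i, 0 < d i) :
    (diagonal fun i ↦ (d i : 𝕜))⁻¹ = invSqrtDiagonal d * invSqrtDiagonal d := by
  refine inv_eq_left_inv ?_
  rw [invSqrtDiagonal_mul_self fun i ↦ (hd i).le, diagonal_mul_diagonal, ← diagonal_one]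
  congr! with i
  rw [← RCLike.ofReal_mul, inv_mul_cancel₀ (hd i).ne', RCLike.ofReal_one]

theorem det_one_add_smul_inv_diagonal_mul {d : n → ℝ} (hd : ∀ i, 0 < d i) (A : Matrix n n 𝕜)
    (t : 𝕜) :
    det (1 + t • ((diagonal fun i ↦ (d i : 𝕜))⁻¹ * A)) =
      det (1 + t • (invSqrtDiagonal d * A * invSqrtDiagonal d)) := by
  rw [inv_diagonal_eq_invSqrtDiagonal_mul_self hd, Matrix.mul_assoc, ← smul_mul_assoc,
    det_one_add_mul_comm, mul_smul_comm]

theorem PosSemidef.re_det_one_add_smul_inv_diagonal_mul_le {A : Matrix n n 𝕜}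
    (hA : A.PosSemidef) {d : n → ℝ} (hd : ∀ i, 0 < d i) {t : ℝ} (ht : 0 ≤ t) {m : ℕ}
    (hm : A.rank ≤ m) :
    1 ≤ RCLike.re (det (1 + (t : 𝕜) • ((diagonal fun i ↦ (d i : 𝕜))⁻¹ * A))) ∧
      RCLike.re (det (1 + (t : 𝕜) • ((diagonal fun i ↦ (d i : 𝕜))⁻¹ * A))) ≤
        (1 + t * (∑ i, RCLike.re (A i i) / d i) / m) ^ m := by
  set G : Matrix n n 𝕜 := invSqrtDiagonal d
  have hM : (G * A * G).PosSemidef := by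
    simpa [G, invSqrtDiagonal_conjTranspose] using hA.conjTranspose_mul_mul_same G
  have hrank : (G * A * G).rank ≤ m :=
    ((rank_mul_le_left _ _).trans (rank_mul_le_right _ _)).trans hm
  have htrace : RCLike.re (G * A * G).trace = ∑ i, RCLike.re (A i i) / d i := by
    rw [trace_mul_cycle, invSqrtDiagonal_mul_self fun i ↦ (hd i).le, trace, map_sum]
    simp only [diag_apply, diagonal_mul, RCLike.re_ofReal_mul, div_eq_inv_mul]
  rw [det_one_add_smul_inv_diagonal_mul hd, ← htrace]
  exact ⟨hM.one_le_re_det_one_add_smul ht, hM.re_det_one_add_smul_le ht hrank⟩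

end Matrix

theorem stmt10_general (N m : ℕ) (hm : 1 ≤ m)
    (A : Matrix (Fin N) (Fin N) ℂ) (hA : A.PosSemidef) (hrank : A.rank ≤ m)
    (lam : ℝ) (htr : A.trace.re ≤ m * lam)
    (α ρ : ℝ) (hα : α ∈ Set.Ioo (0 : ℝ) 1) (hρ : 0 < ρ) :
    Real.logb 2
        (1 + ((α / (1 - α) : ℝ) : ℂ) •
            ((Matrix.diagonal A.diag + ((1 / ((1 - α) * ρ) : ℝ) : ℂ) • 1)⁻¹ * A)).det.re ≤
      m * Real.logb 2 (1 + α * lam * N / (lam * m * (1 - α) + N / ρ)) := by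
  obtain ⟨hα0, hα1⟩ := hα
  set β := 1 - α
  have hβ : 0 < β := sub_pos.mpr hα1
  set c : ℝ := 1 / (β * ρ)
  have hc : 0 < c := by positivity
  set a : Fin N → ℝ := fun i ↦ (A i i).re
  have ha : ∀ i, 0 ≤ a i := fun i ↦ (Complex.le_def.mp hA.diag_nonneg).1
  have hd : ∀ i, 0 < a i + c := fun i ↦ by linarith [ha i]
  have hD : diagonal A.diag + (c : ℂ) • 1 = diagonal fun i ↦ ((a i + c : ℝ) : ℂ) :=
    hA.isHermitian.diagonal_diag_add_smul_one c
  rw [hD]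
  set X := (1 + ((α / β : ℝ) : ℂ) • ((diagonal fun i ↦ ((a i + c : ℝ) : ℂ))⁻¹ * A)).det.re
  obtain ⟨hone, hle⟩ : 1 ≤ X ∧ X ≤ (1 + α / β * (∑ i, a i / (a i + c)) / m) ^ m :=
    hA.re_det_one_add_smul_inv_diagonal_mul_le (d := fun i ↦ a i + c) hd (t := α / β)
      (by positivity) hrank
  have hS0 : 0 ≤ ∑ i, a i / (a i + c) := sum_nonneg fun i _ ↦ div_nonneg (ha i) (hd i).le
  have hm0 : (0 : ℝ) < m := by exact_mod_cast hm
  have hmean : α / β * (∑ i, a i / (a i + c)) / m ≤ α * lam * N / (lam * m * β + N / ρ) :=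
    calc _ ≤ α / β * (N * (m * lam) / (m * lam + N * c)) / m := by
          gcongr
          simpa using Real.sum_div_add_le ha hc (by simpa [trace, a] using htr)
      _ = _ := by simp only [c]; field_simp
  rw [← Real.logb_pow]
  refine Real.logb_le_logb_of_le one_lt_two (by linarith) (hle.trans ?_)
  gcongr

theorem stmt10 (N m : ℕ) (hm : 1 ≤ m)
    (A : Matrix (Fin N) (Fin N) ℂ) (hA : A.PosSemidef) (hrank : A.rank ≤ m)
    (lam : ℝ) (hlam : 0 < lam) (htr : A.trace.re ≤ m * lam)
    (α ρ : ℝ) (hα : α ∈ Set.Ioo (0 : ℝ) 1) (hρ : 0 < ρ) :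
    Real.logb 2
        (1 + ((α / (1 - α) : ℝ) : ℂ) •
            ((Matrix.diagonal A.diag + ((1 / ((1 - α) * ρ) : ℝ) : ℂ) • 1)⁻¹ * A)).det.re ≤
      m * Real.logb 2 (1 + α * lam * N / (lam * m * (1 - α) + N / ρ)) :=
  stmt10_general N m hm A hA hrank lam htr α ρ hα hρ
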